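/- Let ψ, φ be unit vectors in ℂ² and let a, b be real numbers. Then the largest eigenvalue of the Hermitian 2×2 matrix a·|ψ⟩⟨ψ| + b·|φ⟩⟨φ| equals (a+b)/2 + (1/2)·√((a−b)² + 4ab·|⟨ψ,φ⟩|²), where |ψ⟩⟨ψ| denotes the orthogonal projection onto the span of ψ and ⟨ψ,φ⟩ the Hermitian inner product. Equivalently, the maximum of tr(ρ(a|ψ⟩⟨ψ| + b|φ⟩⟨φ|)) over all qubit states ρ equals this quantity. -/

import Mathlib

/-!
The value `Re tr(ρA)` of a Hermitian `A` on a state `ρ` is a convex combination of the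
eigenvalues of `A` (conjugate `ρ` by the unitary diagonalising `A`), so its maximum over states is
the largest eigenvalue, attained at the projection onto a top eigenvector. For a `2 × 2` Hermitian
matrix the larger eigenvalue is `tr A / 2 + √((tr A)² - 4 det A) / 2`, and for
`A = a|ψ⟩⟨ψ| + b|φ⟩⟨φ|` we have `tr A = a + b` and, by Lagrange's identity in `ℂ²`,
`det A = ab (1 - |⟨ψ, φ⟩|²)`.
-/

open Matrix
open scoped ComplexOrder

noncomputable section

abbrev Mat2 := Matrix (Fin 2) (Fin 2) ℂ

/-- The rank-one projection (outer product) `|v⟩⟨v|`. -/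
def proj (v : Fin 2 → ℂ) : Mat2 := vecMulVec v (star v)

lemma ciSup_fin_two {α : Type*} [ConditionallyCompleteLattice α] (f : Fin 2 → α) :
    ⨆ i, f i = f 0 ⊔ f 1 := by
  refine le_antisymm (ciSup_le fun i ↦ ?_) (sup_le (le_ciSup (Finite.bddAbove_range f) 0)
    (le_ciSup (Finite.bddAbove_range f) 1))
  fin_cases i <;> simp

lemma max_eq_half_add_sqrt_sq_sub_four_mul (x y : ℝ) :
    max x y = (x + y) / 2 + √((x + y) ^ 2 - 4 * (x * y)) / 2 := by
  rw [show (x + y) ^ 2 - 4 * (x * y) = (y - x) ^ 2 by ring, Real.sqrt_sq_eq_abs,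
    sup_eq_half_smul_add_add_abs_sub' ℝ, smul_eq_mul]
  ring

namespace Matrix.IsHermitian

variable {𝕜 n : Type*} [RCLike 𝕜] [Fintype n] [DecidableEq n] {A : Matrix n n 𝕜}
  (hA : A.IsHermitian)

lemma trace_mul_eq_sum_diag_conj_mul_eigenvalues (ρ : Matrix n n 𝕜) :
    (ρ * A).trace = ∑ i, (star (hA.eigenvectorUnitary : Matrix n n 𝕜) * ρ *
      hA.eigenvectorUnitary) i i * hA.eigenvalues i := by
  conv_lhs => rw [hA.spectral_theorem, Unitary.conjStarAlgAut_apply, ← mul_assoc, ← mul_assoc,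
    trace_mul_cycle, ← mul_assoc]
  simp [trace, mul_diagonal]

lemma re_trace_mul_le_iSup_eigenvalues {ρ : Matrix n n 𝕜} (hρ : ρ.PosSemidef)
    (hρ₁ : ρ.trace = 1) : RCLike.re (ρ * A).trace ≤ ⨆ i, hA.eigenvalues i := by
  set U : Matrix n n 𝕜 := ↑hA.eigenvectorUnitary
  set σ := star U * ρ * U
  have hσ : σ.PosSemidef := hρ.conjTranspose_mul_mul_same U
  have hσ₁ : σ.trace = 1 := by
    rw [trace_mul_cycle, Unitary.mul_star_self_of_mem hA.eigenvectorUnitary.2, one_mul, hρ₁]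
  have hle : ∀ i, hA.eigenvalues i ≤ ⨆ j, hA.eigenvalues j :=
    le_ciSup (Set.finite_range _).bddAbove
  have : (ρ * A).trace ≤ ((⨆ j, hA.eigenvalues j : ℝ) : 𝕜) := calc
    (ρ * A).trace = ∑ i, σ i i * hA.eigenvalues i :=
      hA.trace_mul_eq_sum_diag_conj_mul_eigenvalues ρ
    _ ≤ ∑ i, σ i i * ((⨆ j, hA.eigenvalues j : ℝ) : 𝕜) := by
      gcongr with i
      · exact hσ.diag_nonneg
      · exact_mod_cast hle i
    _ = _ := by rw [← Finset.sum_mul]; change σ.trace * _ = _; rw [hσ₁, one_mul]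
  simpa using RCLike.re_le_re this

lemma exists_state_re_trace_mul_eq_eigenvalue (k : n) :
    ∃ ρ : Matrix n n 𝕜, ρ.PosSemidef ∧ ρ.trace = 1 ∧
      RCLike.re (ρ * A).trace = hA.eigenvalues k := by
  set u := hA.eigenvectorBasis k
  have hu : (u : n → 𝕜) ⬝ᵥ star ⇑u = 1 := by
    rw [← EuclideanSpace.inner_eq_star_dotProduct, inner_self_eq_norm_sq_to_K,
      hA.eigenvectorBasis.orthonormal.1 k]
    simp
  refine ⟨vecMulVec u (star u), posSemidef_vecMulVec_self_star _, by rwa [trace_vecMulVec], ?_⟩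
  rw [trace_mul_comm, mul_vecMulVec, trace_vecMulVec, hA.mulVec_eigenvectorBasis,
    RCLike.real_smul_eq_coe_smul (K := 𝕜), smul_dotProduct, hu]
  simp

theorem isGreatest_re_trace_mul_iSup_eigenvalues [Nonempty n] :
    IsGreatest
      {r | ∃ ρ : Matrix n n 𝕜, ρ.PosSemidef ∧ ρ.trace = 1 ∧ RCLike.re (ρ * A).trace = r}
      (⨆ i, hA.eigenvalues i) := by
  refine ⟨?_, fun _ ⟨ρ, hρ, hρ₁, hr⟩ ↦ hr ▸ hA.re_trace_mul_le_iSup_eigenvalues hρ hρ₁⟩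
  obtain ⟨k, hk⟩ := exists_eq_ciSup_of_finite (f := hA.eigenvalues)
  exact hk ▸ hA.exists_state_re_trace_mul_eq_eigenvalue k

lemma iSup_eigenvalues_fin_two {A : Matrix (Fin 2) (Fin 2) 𝕜} (hA : A.IsHermitian) :
    ⨆ i, hA.eigenvalues i =
      RCLike.re A.trace / 2 + √(RCLike.re A.trace ^ 2 - 4 * RCLike.re A.det) / 2 := by
  have htr : RCLike.re A.trace = hA.eigenvalues 0 + hA.eigenvalues 1 := by
    simp [hA.trace_eq_sum_eigenvalues, Fin.sum_univ_two]
  have hdet : RCLike.re A.det = hA.eigenvalues 0 * hA.eigenvalues 1 := by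
    rw [hA.det_eq_prod_eigenvalues, Fin.prod_univ_two, ← RCLike.ofReal_mul, RCLike.ofReal_re]
  rw [ciSup_fin_two, htr, hdet, ← max_eq_half_add_sqrt_sq_sub_four_mul]

end Matrix.IsHermitian

lemma trace_proj (v : Fin 2 → ℂ) : (proj v).trace = ∑ i, (Complex.normSq (v i) : ℂ) := by
  simp [proj, dotProduct, Complex.mul_conj]

lemma det_smul_proj_add_smul_proj (a b : ℂ) (ψ φ : Fin 2 → ℂ) :
    (a • proj ψ + b • proj φ).det = a * b * Complex.normSq (ψ 0 * φ 1 - ψ 1 * φ 0) := by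
  rw [Complex.normSq_eq_conj_mul_self]
  simp only [proj, det_fin_two, Matrix.add_apply, Matrix.smul_apply, vecMulVec_apply,
    Pi.star_apply, RCLike.star_def, smul_eq_mul, map_sub, map_mul]
  ring

lemma normSq_cross_add_normSq_dotProduct (ψ φ : Fin 2 → ℂ) :
    Complex.normSq (ψ 0 * φ 1 - ψ 1 * φ 0) + Complex.normSq (star ψ ⬝ᵥ φ) =
      (∑ i, Complex.normSq (ψ i)) * ∑ i, Complex.normSq (φ i) := by
  simp only [dotProduct, Fin.sum_univ_two, Pi.star_apply, RCLike.star_def, Complex.normSq_apply,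
    Complex.mul_re, Complex.mul_im, Complex.sub_re, Complex.sub_im, Complex.add_re,
    Complex.add_im, Complex.conj_re, Complex.conj_im]
  ring

theorem largest_eigenvalue_rank_one_combination
    (ψ φ : Fin 2 → ℂ)
    (hψ : ∑ i, Complex.normSq (ψ i) = 1) (hφ : ∑ i, Complex.normSq (φ i) = 1)
    (a b : ℝ)
    (hM : ((a : ℂ) • proj ψ + (b : ℂ) • proj φ).IsHermitian) :
    (⨆ i, hM.eigenvalues i)
      = (a + b) / 2
        + Real.sqrt ((a - b) ^ 2 + 4 * a * b * Complex.normSq (star ψ ⬝ᵥ φ)) / 2 ∧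
    IsGreatest
      {r : ℝ | ∃ ρ : Mat2, ρ.PosSemidef ∧ ρ.trace = 1 ∧
        ((ρ * ((a : ℂ) • proj ψ + (b : ℂ) • proj φ)).trace).re = r}
      ((a + b) / 2
        + Real.sqrt ((a - b) ^ 2 + 4 * a * b * Complex.normSq (star ψ ⬝ᵥ φ)) / 2) := by
  have htr : ((a : ℂ) • proj ψ + (b : ℂ) • proj φ).trace.re = a + b := by
    simp [trace_proj, ← Complex.ofReal_sum, hψ, hφ]
  have hdet : ((a : ℂ) • proj ψ + (b : ℂ) • proj φ).det.re =
      a * b * (1 - Complex.normSq (star ψ ⬝ᵥ φ)) := by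
    have hcross := normSq_cross_add_normSq_dotProduct ψ φ
    rw [hψ, hφ, one_mul] at hcross
    rw [det_smul_proj_add_smul_proj, ← eq_sub_of_add_eq hcross]
    norm_cast
  have hmax : ⨆ i, hM.eigenvalues i =
      (a + b) / 2 + √((a - b) ^ 2 + 4 * a * b * Complex.normSq (star ψ ⬝ᵥ φ)) / 2 := by
    rw [hM.iSup_eigenvalues_fin_two, RCLike.re_to_complex, RCLike.re_to_complex, htr, hdet]
    ring_nf
  exact ⟨hmax, hmax ▸ hM.isGreatest_re_trace_mul_iSup_eigenvalues⟩
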